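/- arXiv:1604.08573 — 4 statements merged into one kernel-verified Lean document; each statement's English description precedes it below -/
import Mathlib

section
/- (Lemma 2) Let n ≥ 1 and let ρ0 ∈ ℝ^n be nondecreasing. If (a_A), indexed by the subsets A of {1,…,n−1}, are nonnegative real numbers with ∑_A a_A = 1 and ∑_A a_A S_A = S_B for some subset B ⊆ {1,…,n−1}, then S_A = S_B for every subset A with a_A > 0. In particular, no S_B can be written as a nontrivial convex combination of points S_A distinct from S_B. -/
/-- The averaging operator `B_{ij}` : averages the populations at vertices `i` and `j`,
leaving the other components unchanged. -/
noncomputable def avg {n : ℕ} (i j : Fin n) (ρ : Fin n → ℝ) : Fin n → ℝ :=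
  fun k => if k = i ∨ k = j then (ρ i + ρ j) / 2 else ρ k

/-- The attainable set `A(ρ0, E)`: all vectors obtained from `ρ0` by applying a finite
sequence of operators `B_{ij}` with `{i,j} ∈ E` (and `i ≠ j`). -/
def attainable (n : ℕ) (E : Set (Sym2 (Fin n))) (ρ0 : Fin n → ℝ) : Set (Fin n → ℝ) :=
  {ρ | ∃ L : List (Fin n × Fin n),
    (∀ p ∈ L, p.1 ≠ p.2 ∧ s(p.1, p.2) ∈ E) ∧
    ρ = L.foldl (fun σ p => avg p.1 p.2 σ) ρ0}

/-- The edge set of the path graph `P_n` (0-based: edges `{i, i+1}` for `i+1 < n`). -/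
def pathEdges (n : ℕ) : Set (Sym2 (Fin n)) :=
  {e | ∃ i : ℕ, ∃ h : i + 1 < n, e = s(⟨i, Nat.lt_of_succ_lt h⟩, ⟨i + 1, h⟩)}

/-- Start of the block of index `j` determined by `A` (0-based: `i ∈ A` means indices
`i` and `i+1` lie in the same block): the least `a` with `[a, j) ⊆ A`. -/
def blockStart (A : Finset ℕ) (j : ℕ) : ℕ :=
  Nat.findGreatest (fun a => a ≠ 0 ∧ (a - 1) ∉ A) j

/-- End of the block of index `j` determined by `A`: the greatest `b ≤ n - 1`
with `[j, b) ⊆ A`. -/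
def blockEnd (n : ℕ) (A : Finset ℕ) (j : ℕ) : ℕ :=
  Nat.findGreatest (fun b => ∀ m ∈ Finset.Ico j b, m ∈ A) (n - 1)

/-- The point `S_A`: on each block of consecutive indices determined by `A`, its
components all equal the average of the components of `ρ0` over that block. -/
noncomputable def SA {n : ℕ} (ρ0 : Fin n → ℝ) (A : Finset ℕ) : Fin n → ℝ :=
  fun j =>
    (∑ m ∈ Finset.Icc (blockStart A (j : ℕ)) (blockEnd n A (j : ℕ)),
        if h : m < n then ρ0 ⟨m, h⟩ else 0) /
      ((blockEnd n A (j : ℕ) - blockStart A (j : ℕ) + 1 : ℕ) : ℝ)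

/-- Apply the adjacent averaging operator `B_{p,p+1}` (0-based) if it exists. -/
noncomputable def stepAt (n : ℕ) (p : ℕ) (ρ : Fin n → ℝ) : Fin n → ℝ :=
  if h : p + 1 < n then avg ⟨p, Nat.lt_of_succ_lt h⟩ ⟨p + 1, h⟩ ρ else ρ

/-!
Write `G_A(k) = ∑_{m<k} S_A(m)` and `T(k) = ∑_{m<k} ρ0(m)`. As `ρ0` is nondecreasing, its average
over an initial part of a block is at most its average over the whole block, so `T ≤ G_A`, with
equality at the block boundaries of `A`. The weights `a_A` average the `G_A` to `G_B`, which equals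
`T` at the boundaries of `B`; hence every `S_A` with `a_A > 0` has the same sum as `ρ0` over each
block of `B`. Since `S_A` is nondecreasing, it lies below the value of `S_B` on such a block at the
block's first index and above it at the last; averaging once more forces equality at both ends, and
monotonicity squeezes `S_A` to `S_B` on the whole block.
-/

open Finset
open scoped BigOperators

section Blocks

variable {n : ℕ} {A : Finset ℕ} {i j m : ℕ}

def block (n : ℕ) (A : Finset ℕ) (j : ℕ) : Finset ℕ :=
  Icc (blockStart A j) (blockEnd n A j)

lemma blockStart_le : blockStart A j ≤ j := Nat.findGreatest_le _

lemma blockEnd_le : blockEnd n A j ≤ n - 1 := Nat.findGreatest_le _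

lemma le_blockEnd (hj : j < n) : j ≤ blockEnd n A j :=
  Nat.le_findGreatest (by omega) (by simp)

lemma blockEnd_lt (hj : j < n) : blockEnd n A j < n := by
  have := blockEnd_le (n := n) (A := A) (j := j); omega

lemma pred_blockStart_notMem (h : blockStart A j ≠ 0) : blockStart A j - 1 ∉ A :=
  (Nat.findGreatest_of_ne_zero rfl h).2

lemma blockEnd_notMem (h : blockEnd n A j < n - 1) : blockEnd n A j ∉ A := by
  intro hmem
  have hspec : ∀ m ∈ Ico j (blockEnd n A j), m ∈ A :=
    Nat.findGreatest_spec (P := fun b => ∀ m ∈ Ico j b, m ∈ A) (m := 0) (Nat.zero_le _)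
      (by simp)
  refine Nat.findGreatest_is_greatest (Nat.lt_succ_self _) h ?_
  intro m (hm : m ∈ Ico j (blockEnd n A j + 1))
  obtain hlt | rfl := Nat.lt_or_eq_of_le (Nat.lt_succ_iff.mp (mem_Ico.mp hm).2)
  · exact hspec m (mem_Ico.mpr ⟨(mem_Ico.mp hm).1, by omega⟩)
  · exact hmem

lemma mem_of_mem_Ico_blockStart_blockEnd (hm : m ∈ Ico (blockStart A j) (blockEnd n A j)) :
    m ∈ A := by
  obtain ⟨hsm, hme⟩ := mem_Ico.mp hm
  rcases lt_or_ge m j with hmj | hjm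
  · by_contra hmA
    have : m + 1 ≤ blockStart A j :=
      Nat.le_findGreatest hmj ⟨m.succ_ne_zero, by simpa using hmA⟩
    omega
  · have he : blockEnd n A j ≠ 0 := by omega
    exact Nat.findGreatest_of_ne_zero (P := fun b => ∀ m ∈ Ico j b, m ∈ A) rfl he m
      (mem_Ico.mpr ⟨hjm, hme⟩)

lemma blockStart_eq_of_mem_block (hi : i ∈ block n A j) : blockStart A i = blockStart A j := by
  obtain ⟨hsi, hie⟩ := mem_Icc.mp hi
  refine Nat.findGreatest_eq_iff.mpr ⟨hsi, fun h => ⟨h, pred_blockStart_notMem h⟩, ?_⟩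
  rintro k hsk hki ⟨-, hkA⟩
  exact hkA (mem_of_mem_Ico_blockStart_blockEnd (n := n) (j := j)
    (mem_Ico.mpr ⟨by omega, by omega⟩))

lemma blockEnd_eq_of_mem_block (hi : i ∈ block n A j) : blockEnd n A i = blockEnd n A j := by
  obtain ⟨hsi, hie⟩ := mem_Icc.mp hi
  refine Nat.findGreatest_eq_iff.mpr ⟨blockEnd_le, fun _ m hm => ?_, fun k hek hkn hk => ?_⟩
  · exact mem_of_mem_Ico_blockStart_blockEnd
      (mem_Ico.mpr ⟨by have := (mem_Ico.mp hm).1; omega, (mem_Ico.mp hm).2⟩)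
  · exact blockEnd_notMem (by omega) (hk _ (mem_Ico.mpr ⟨hie, hek⟩))

lemma block_eq_of_mem_block (hi : i ∈ block n A j) : block n A i = block n A j := by
  rw [block, block, blockStart_eq_of_mem_block hi, blockEnd_eq_of_mem_block hi]

lemma mem_block_self (hj : j < n) : j ∈ block n A j :=
  mem_Icc.mpr ⟨blockStart_le, le_blockEnd hj⟩

lemma blockStart_mem_block (hj : j < n) : blockStart A j ∈ block n A j :=
  left_mem_Icc.mpr (blockStart_le.trans (le_blockEnd hj))

lemma blockEnd_mem_block (hj : j < n) : blockEnd n A j ∈ block n A j :=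
  right_mem_Icc.mpr (blockStart_le.trans (le_blockEnd hj))

lemma blockEnd_pred_blockStart (hj : j < n) (h : blockStart A j ≠ 0) :
    blockEnd n A (blockStart A j - 1) = blockStart A j - 1 := by
  have hs : blockStart A j ≤ j := blockStart_le
  refine le_antisymm ?_ (le_blockEnd (by omega))
  by_contra hlt
  exact pred_blockStart_notMem h
    (mem_of_mem_Ico_blockStart_blockEnd (j := blockStart A j - 1) (n := n)
      (mem_Ico.mpr ⟨blockStart_le, by omega⟩))

lemma blockEnd_lt_blockStart (hj : j < n) (hi : blockEnd n A i < j) :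
    blockEnd n A i < blockStart A j :=
  Nat.le_findGreatest (P := fun a => a ≠ 0 ∧ (a - 1) ∉ A) hi
    ⟨by omega, by simpa using blockEnd_notMem (by omega)⟩

end Blocks

lemma MonotoneOn.sum_filter_le_le_card_mul_expect {ι : Type*} [LinearOrder ι] {t : Finset ι} {f : ι → ℝ}
    (hf : MonotoneOn f t) (j : ι) :
    ∑ i ∈ t with i ≤ j, f i ≤ #{i ∈ t | i ≤ j} * 𝔼 i ∈ t, f i := by
  have hanti : AntivaryOn f (fun i => if i ≤ j then (1 : ℝ) else 0) t := by
    intro i hi k hk hlt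
    dsimp only at hlt
    split_ifs at hlt with hij hkj hkj
    · exact absurd hlt (lt_irrefl 1)
    · exact absurd hlt (by norm_num)
    · exact hf hk hi (hkj.trans (not_le.mp hij).le)
    · exact absurd hlt (lt_irrefl 0)
  have := hanti.card_mul_sum_le_sum_mul_sum
  simp only [mul_ite, mul_one, mul_zero, sum_ite, sum_const_zero, add_zero, sum_const,
    nsmul_eq_mul] at this
  rcases t.eq_empty_or_nonempty with rfl | ht
  · simp
  · have hcard : (0 : ℝ) < #t := by exact_mod_cast ht.card_pos
    rw [expect_eq_sum_div_card, mul_div_assoc', le_div_iff₀ hcard]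
    linarith

lemma eq_of_sum_mul_eq_sum_mul {ι : Type*} {s : Finset ι} {w x y : ι → ℝ}
    (hw : ∀ i ∈ s, 0 ≤ w i) (hxy : ∀ i ∈ s, 0 < w i → x i ≤ y i)
    (h : ∑ i ∈ s, w i * x i = ∑ i ∈ s, w i * y i) {i : ι} (hi : i ∈ s) (hwi : 0 < w i) :
    x i = y i := by
  have hle : ∀ k ∈ s, w k * x k ≤ w k * y k := fun k hk => by
    rcases (hw k hk).eq_or_lt with h0 | hpos
    · simp [← h0]
    · exact mul_le_mul_of_nonneg_left (hxy k hk hpos) hpos.le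
  exact mul_left_cancel₀ hwi.ne' ((sum_eq_sum_iff_of_le hle).mp h i hi)

section Averages

variable {n : ℕ} (ρ0 : Fin n → ℝ) {A : Finset ℕ} {i j : ℕ}

noncomputable def extendByZero (m : ℕ) : ℝ := if h : m < n then ρ0 ⟨m, h⟩ else 0

noncomputable def blockAvg (A : Finset ℕ) (j : ℕ) : ℝ :=
  𝔼 i ∈ block n A j, extendByZero ρ0 i

lemma SA_apply (A : Finset ℕ) (j : Fin n) : SA ρ0 A j = blockAvg ρ0 A j := by
  have hs : blockStart A j ≤ blockEnd n A j := blockStart_le.trans (le_blockEnd j.isLt)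
  rw [blockAvg, expect_eq_sum_div_card, block, Nat.card_Icc, Nat.sub_add_comm hs]
  rfl

variable {ρ0}

lemma monotoneOn_extendByZero (hρ : Monotone ρ0) : MonotoneOn (extendByZero ρ0) (Set.Iio n) :=
  fun x (hx : x < n) y (hy : y < n) hxy => by
    simpa [extendByZero, hx, hy] using hρ (Fin.mk_le_mk.mpr hxy)

lemma block_subset_Iio (hj : j < n) : (block n A j : Set ℕ) ⊆ Set.Iio n := fun _ hi =>
  (mem_Icc.mp hi).2.trans_lt (blockEnd_lt hj)

lemma expect_block_mem_Icc {f : ℕ → ℝ} (hf : MonotoneOn f (Set.Iio n)) (hj : j < n) :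
    𝔼 i ∈ block n A j, f i ∈ Set.Icc (f (blockStart A j)) (f (blockEnd n A j)) := by
  have hmono := hf.mono (block_subset_Iio (A := A) hj)
  have hne : (block n A j).Nonempty := ⟨j, mem_block_self hj⟩
  exact ⟨le_expect hne fun i hi => hmono (blockStart_mem_block hj) hi (mem_Icc.mp hi).1,
    expect_le hne fun i hi => hmono hi (blockEnd_mem_block hj) (mem_Icc.mp hi).2⟩

lemma blockAvg_eq_of_mem_block (hi : i ∈ block n A j) : blockAvg ρ0 A i = blockAvg ρ0 A j := by
  rw [blockAvg, blockAvg, block_eq_of_mem_block hi]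

lemma sum_block_blockAvg :
    ∑ i ∈ block n A j, blockAvg ρ0 A i = ∑ i ∈ block n A j, extendByZero ρ0 i := by
  rw [sum_congr rfl fun i hi => blockAvg_eq_of_mem_block hi, sum_const, blockAvg,
    card_smul_expect]

lemma monotoneOn_blockAvg (hρ : Monotone ρ0) : MonotoneOn (blockAvg ρ0 A) (Set.Iio n) := by
  intro i (hi : i < n) j (hj : j < n) hij
  by_cases hji : j ≤ blockEnd n A i
  · exact (blockAvg_eq_of_mem_block (mem_Icc.mpr ⟨blockStart_le.trans hij, hji⟩)).ge
  · have hlt := blockEnd_lt_blockStart (A := A) hj (not_le.mp hji)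
    have hext := monotoneOn_extendByZero hρ
    calc blockAvg ρ0 A i ≤ extendByZero ρ0 (blockEnd n A i) := (expect_block_mem_Icc hext hi).2
      _ ≤ extendByZero ρ0 (blockStart A j) :=
        hext (blockEnd_lt hi) (blockStart_le.trans_lt hj) hlt.le
      _ ≤ blockAvg ρ0 A j := (expect_block_mem_Icc hext hj).1

end Averages

section PrefixSums

variable {n : ℕ} {ρ0 : Fin n → ℝ} {A : Finset ℕ} {j k : ℕ}

lemma sum_range_blockEnd_add_one (f : ℕ → ℝ) (hj : j < n) :
    ∑ m ∈ range (blockEnd n A j + 1), f m =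
      ∑ m ∈ range (blockStart A j), f m + ∑ m ∈ block n A j, f m := by
  rw [block, ← Ico_add_one_right_eq_Icc,
    sum_range_add_sum_Ico _ (Nat.le_add_right_of_le (blockStart_le.trans (le_blockEnd hj)))]

lemma sum_range_blockStart_blockAvg (hj : j < n) :
    ∑ m ∈ range (blockStart A j), blockAvg ρ0 A m =
      ∑ m ∈ range (blockStart A j), extendByZero ρ0 m := by
  induction j using Nat.strong_induction_on with
  | _ j ih =>
    obtain hs | hs := eq_or_ne (blockStart A j) 0
    · simp [hs]
    have hi : blockStart A j - 1 < j := by have : blockStart A j ≤ j := blockStart_le; omega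
    have hse : blockStart A j = blockEnd n A (blockStart A j - 1) + 1 := by
      rw [blockEnd_pred_blockStart hj hs]; omega
    rw [hse, sum_range_blockEnd_add_one _ (hi.trans hj),
      sum_range_blockEnd_add_one _ (hi.trans hj), ih _ hi (hi.trans hj), sum_block_blockAvg]

lemma sum_range_blockEnd_add_one_blockAvg (hj : j < n) :
    ∑ m ∈ range (blockEnd n A j + 1), blockAvg ρ0 A m =
      ∑ m ∈ range (blockEnd n A j + 1), extendByZero ρ0 m := by
  rw [sum_range_blockEnd_add_one _ hj, sum_range_blockEnd_add_one _ hj,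
    sum_range_blockStart_blockAvg hj, sum_block_blockAvg]

lemma sum_range_le_sum_range_blockAvg (hρ : Monotone ρ0) (hk : k ≤ n) :
    ∑ m ∈ range k, extendByZero ρ0 m ≤ ∑ m ∈ range k, blockAvg ρ0 A m := by
  obtain _ | j := k
  · simp
  have hj : j < n := hk
  have hsj : blockStart A j ≤ j := blockStart_le
  have hinit : {i ∈ block n A j | i ≤ j} = Icc (blockStart A j) j := by
    ext i; simp only [block, mem_filter, mem_Icc]; have := le_blockEnd (A := A) hj; omega
  have hsplit (f : ℕ → ℝ) : ∑ m ∈ range (j + 1), f m =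
      ∑ m ∈ range (blockStart A j), f m + ∑ m ∈ Icc (blockStart A j) j, f m := by
    rw [← Ico_add_one_right_eq_Icc, sum_range_add_sum_Ico _ (Nat.le_add_right_of_le hsj)]
  have hconst : ∑ m ∈ Icc (blockStart A j) j, blockAvg ρ0 A m =
      #(Icc (blockStart A j) j) * blockAvg ρ0 A j := by
    rw [← hinit, ← nsmul_eq_mul, ← sum_const]
    exact sum_congr rfl fun i hi => blockAvg_eq_of_mem_block (mem_filter.mp hi).1
  have hcheb := ((monotoneOn_extendByZero hρ).mono
    (block_subset_Iio (A := A) hj)).sum_filter_le_le_card_mul_expect j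
  rw [hinit] at hcheb
  rw [hsplit, hsplit, sum_range_blockStart_blockAvg hj, hconst]
  gcongr
  exact hcheb

end PrefixSums

section ConvexCombination

variable {n : ℕ} {ρ0 : Fin n → ℝ} {P : Finset (Finset ℕ)} {a : Finset ℕ → ℝ} {A B : Finset ℕ}
  {j k : ℕ}

lemma sum_range_blockAvg_eq_of_pos (hρ : Monotone ρ0) (ha : ∀ A ∈ P, 0 ≤ a A)
    (hsum : ∑ A ∈ P, a A = 1)
    (hcomb : ∀ m < n, ∑ A ∈ P, a A * blockAvg ρ0 A m = blockAvg ρ0 B m) (hk : k ≤ n)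
    (hB : ∑ m ∈ range k, blockAvg ρ0 B m = ∑ m ∈ range k, extendByZero ρ0 m)
    (hA : A ∈ P) (hpos : 0 < a A) :
    ∑ m ∈ range k, blockAvg ρ0 A m = ∑ m ∈ range k, extendByZero ρ0 m := by
  have hmix :
      ∑ A ∈ P, a A * ∑ m ∈ range k, blockAvg ρ0 A m = ∑ m ∈ range k, blockAvg ρ0 B m := by
    simp_rw [mul_sum]
    rw [sum_comm]
    exact sum_congr rfl fun m hm => hcomb m ((mem_range.mp hm).trans_le hk)
  refine (eq_of_sum_mul_eq_sum_mul (y := fun A => ∑ m ∈ range k, blockAvg ρ0 A m) ha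
    (fun _ _ _ => sum_range_le_sum_range_blockAvg hρ hk) ?_ hA hpos).symm
  rw [← sum_mul, hsum, one_mul, hmix, hB]

lemma sum_block_blockAvg_eq_of_pos (hρ : Monotone ρ0) (ha : ∀ A ∈ P, 0 ≤ a A)
    (hsum : ∑ A ∈ P, a A = 1)
    (hcomb : ∀ m < n, ∑ A ∈ P, a A * blockAvg ρ0 A m = blockAvg ρ0 B m) (hj : j < n)
    (hA : A ∈ P) (hpos : 0 < a A) :
    ∑ i ∈ block n B j, blockAvg ρ0 A i = ∑ i ∈ block n B j, extendByZero ρ0 i := by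
  have hstart := sum_range_blockAvg_eq_of_pos hρ ha hsum hcomb
    (blockStart_le.trans hj.le) (sum_range_blockStart_blockAvg hj) hA hpos
  have hend := sum_range_blockAvg_eq_of_pos hρ ha hsum hcomb
    (blockEnd_lt hj) (sum_range_blockEnd_add_one_blockAvg hj) hA hpos
  rw [sum_range_blockEnd_add_one _ hj, sum_range_blockEnd_add_one _ hj, hstart] at hend
  exact add_left_cancel hend

lemma blockAvg_mem_Icc_of_sum_block_eq (hρ : Monotone ρ0) (hj : j < n)
    (h : ∑ i ∈ block n B j, blockAvg ρ0 A i = ∑ i ∈ block n B j, extendByZero ρ0 i) :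
    blockAvg ρ0 B j ∈
      Set.Icc (blockAvg ρ0 A (blockStart B j)) (blockAvg ρ0 A (blockEnd n B j)) := by
  have hexp : blockAvg ρ0 B j = 𝔼 i ∈ block n B j, blockAvg ρ0 A i := by
    rw [blockAvg, expect_eq_sum_div_card, expect_eq_sum_div_card, h]
  exact hexp ▸ expect_block_mem_Icc (monotoneOn_blockAvg hρ) hj

lemma blockAvg_eq_of_pos (hρ : Monotone ρ0) (ha : ∀ A ∈ P, 0 ≤ a A) (hsum : ∑ A ∈ P, a A = 1)
    (hcomb : ∀ m < n, ∑ A ∈ P, a A * blockAvg ρ0 A m = blockAvg ρ0 B m)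
    (hA : A ∈ P) (hpos : 0 < a A) (hj : j < n) : blockAvg ρ0 A j = blockAvg ρ0 B j := by
  have hbounds (A' : Finset ℕ) (hA' : A' ∈ P) (hpos' : 0 < a A') :=
    blockAvg_mem_Icc_of_sum_block_eq hρ hj
      (sum_block_blockAvg_eq_of_pos hρ ha hsum hcomb hj hA' hpos')
  have hconst (x : ℝ) : ∑ A' ∈ P, a A' * x = x := by rw [← sum_mul, hsum, one_mul]
  have hcomb_block {i : ℕ} (hi : i ∈ block n B j) : ∑ A' ∈ P, a A' * blockAvg ρ0 A' i =
      ∑ A' ∈ P, a A' * blockAvg ρ0 B j := by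
    rw [hconst, hcomb i (block_subset_Iio hj hi), blockAvg_eq_of_mem_block hi]
  have hstart : blockAvg ρ0 A (blockStart B j) = blockAvg ρ0 B j :=
    eq_of_sum_mul_eq_sum_mul ha (fun A' hA' h => (hbounds A' hA' h).1)
      (hcomb_block (blockStart_mem_block hj)) hA hpos
  have hend : blockAvg ρ0 B j = blockAvg ρ0 A (blockEnd n B j) :=
    eq_of_sum_mul_eq_sum_mul ha (fun A' hA' h => (hbounds A' hA' h).2)
      (hcomb_block (blockEnd_mem_block hj)).symm hA hpos
  have hmono := monotoneOn_blockAvg (A := A) hρ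
  exact le_antisymm
    (hend ▸ hmono hj (blockEnd_lt hj) (le_blockEnd hj))
    (hstart ▸ hmono (blockStart_le.trans_lt hj) hj blockStart_le)

end ConvexCombination

theorem SA_extreme_among_SA_general (n : ℕ)
    (ρ0 : Fin n → ℝ) (hρ0 : Monotone ρ0)
    (a : Finset ℕ → ℝ)
    (ha : ∀ A ∈ (Finset.range (n - 1)).powerset, 0 ≤ a A)
    (hsum : ∑ A ∈ (Finset.range (n - 1)).powerset, a A = 1)
    (B : Finset ℕ)
    (hcomb : ∑ A ∈ (Finset.range (n - 1)).powerset, a A • SA ρ0 A = SA ρ0 B) :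
    ∀ A ∈ (Finset.range (n - 1)).powerset, 0 < a A → SA ρ0 A = SA ρ0 B := by
  intro A hA hpos
  have hcoord (m : ℕ) (hm : m < n) :
      ∑ A ∈ (Finset.range (n - 1)).powerset, a A * blockAvg ρ0 A m = blockAvg ρ0 B m := by
    simpa [Finset.sum_apply, SA_apply] using congrFun hcomb ⟨m, hm⟩
  funext j
  rw [SA_apply, SA_apply]
  exact blockAvg_eq_of_pos hρ0 ha hsum hcoord hA hpos j.isLt

/-- Lemma 2: no point `S_B` can be written as a nontrivial convex combination of the
points `S_A`: if a convex combination of the `S_A` equals `S_B`, then every `S_A`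
appearing with positive weight equals `S_B`. -/
theorem SA_extreme_among_SA (n : ℕ) (hn : 1 ≤ n)
    (ρ0 : Fin n → ℝ) (hρ0 : Monotone ρ0)
    (a : Finset ℕ → ℝ)
    (ha : ∀ A ∈ (Finset.range (n - 1)).powerset, 0 ≤ a A)
    (hsum : ∑ A ∈ (Finset.range (n - 1)).powerset, a A = 1)
    (B : Finset ℕ) (hB : B ⊆ Finset.range (n - 1))
    (hcomb : ∑ A ∈ (Finset.range (n - 1)).powerset, a A • SA ρ0 A = SA ρ0 B) :
    ∀ A ∈ (Finset.range (n - 1)).powerset, 0 < a A → SA ρ0 A = SA ρ0 B :=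
  SA_extreme_among_SA_general n ρ0 hρ0 a ha hsum B hcomb
end

section
/- Let G be a connected simple graph on the vertex set {1,…,n} with edge set E, and let ρ0 ∈ ℝ^n. Then the constant vector all of whose components equal (ρ0_1 + ⋯ + ρ0_n)/n lies in the topological closure of the attainable set A(ρ0, E). -/
open Finset

section Averaging

variable {n : ℕ}

theorem continuous_avg (i j : Fin n) : Continuous (avg i j) :=
  continuous_pi fun k => by
    unfold avg
    split_ifs
    · fun_prop
    · exact continuous_apply k

@[simp]
theorem avg_self (i : Fin n) (ρ : Fin n → ℝ) : avg i i ρ = ρ := by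
  funext k
  by_cases hk : k = i
  · subst hk; simp [avg]
  · simp [avg, hk]

theorem sum_comp_avg (f : ℝ → ℝ) {i j : Fin n} (hij : i ≠ j) (ρ : Fin n → ℝ) :
    ∑ k, f (avg i j ρ k) + f (ρ i) + f (ρ j) =
      ∑ k, f (ρ k) + 2 * f ((ρ i + ρ j) / 2) := by
  have hj : j ∈ (univ : Finset (Fin n)).erase i := mem_erase.2 ⟨hij.symm, mem_univ j⟩
  have hrest :
      ∀ k ∈ ((univ : Finset (Fin n)).erase i).erase j, f (avg i j ρ k) = f (ρ k) := by
    intro k hk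
    obtain ⟨hkj, hki, -⟩ := mem_erase.1 hk |>.imp_right mem_erase.1
    simp [avg, hki, hkj]
  rw [← add_sum_erase _ _ (mem_univ i), ← add_sum_erase _ _ hj, sum_congr rfl hrest,
    ← add_sum_erase _ (fun k => f (ρ k)) (mem_univ i), ← add_sum_erase _ _ hj]
  simp only [avg, true_or, or_true, if_true]
  ring

theorem sum_avg (i j : Fin n) (ρ : Fin n → ℝ) : ∑ k, avg i j ρ k = ∑ k, ρ k := by
  obtain rfl | hij := eq_or_ne i j
  · simp
  · linarith [sum_comp_avg (fun x => x) hij ρ]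

theorem sum_sq_avg (i j : Fin n) (ρ : Fin n → ℝ) :
    ∑ k, avg i j ρ k ^ 2 = ∑ k, ρ k ^ 2 - (ρ i - ρ j) ^ 2 / 2 := by
  obtain rfl | hij := eq_or_ne i j
  · simp
  · linarith [sum_comp_avg (· ^ 2) hij ρ]

theorem norm_avg_le (i j : Fin n) (ρ : Fin n → ℝ) : ‖avg i j ρ‖ ≤ ‖ρ‖ := by
  refine (pi_norm_le_iff_of_nonneg (norm_nonneg ρ)).2 fun k => ?_
  have hi := norm_le_pi_norm ρ i
  have hj := norm_le_pi_norm ρ j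
  unfold avg
  split_ifs
  · calc ‖(ρ i + ρ j) / 2‖ ≤ (‖ρ i‖ + ‖ρ j‖) / 2 := by
          rw [norm_div, Real.norm_two]; gcongr; exact norm_add_le _ _
      _ ≤ ‖ρ‖ := by linarith
  · exact norm_le_pi_norm ρ k

end Averaging

section Attainable

variable {n : ℕ} {E : Set (Sym2 (Fin n))} {ρ0 : Fin n → ℝ}

theorem self_mem_attainable : ρ0 ∈ attainable n E ρ0 :=
  ⟨[], by simp, rfl⟩

theorem avg_mem_attainable {ρ : Fin n → ℝ} (hρ : ρ ∈ attainable n E ρ0) {i j : Fin n}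
    (hij : i ≠ j) (he : s(i, j) ∈ E) : avg i j ρ ∈ attainable n E ρ0 := by
  obtain ⟨L, hL, rfl⟩ := hρ
  refine ⟨L ++ [(i, j)], fun p hp => ?_, by simp⟩
  rcases List.mem_append.1 hp with hp | hp
  · exact hL p hp
  · obtain rfl := List.mem_singleton.1 hp
    exact ⟨hij, he⟩

theorem attainable_induction {P : (Fin n → ℝ) → Prop} (h0 : P ρ0)
    (hstep : ∀ ρ i j, i ≠ j → s(i, j) ∈ E → P ρ → P (avg i j ρ)) :
    ∀ ρ ∈ attainable n E ρ0, P ρ := by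
  rintro _ ⟨L, hL, rfl⟩
  induction L using List.reverseRecOn with
  | nil => exact h0
  | append_singleton L p ih =>
    obtain ⟨hp, he⟩ := hL p (by simp)
    simp only [List.foldl_append, List.foldl_cons, List.foldl_nil]
    exact hstep _ _ _ hp he (ih fun q hq => hL q (by simp [hq]))

theorem attainable_subset_closedBall : attainable n E ρ0 ⊆ Metric.closedBall 0 ‖ρ0‖ := by
  intro ρ hρ
  rw [mem_closedBall_zero_iff]
  exact attainable_induction (P := fun σ => ‖σ‖ ≤ ‖ρ0‖) le_rfl
    (fun _ i j _ _ h => (norm_avg_le i j _).trans h) ρ hρ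

theorem isCompact_closure_attainable : IsCompact (closure (attainable n E ρ0)) :=
  (isCompact_closedBall _ _).of_isClosed_subset isClosed_closure
    (closure_minimal attainable_subset_closedBall Metric.isClosed_closedBall)

theorem avg_mem_closure_attainable {ρ : Fin n → ℝ} (hρ : ρ ∈ closure (attainable n E ρ0))
    {i j : Fin n} (hij : i ≠ j) (he : s(i, j) ∈ E) :
    avg i j ρ ∈ closure (attainable n E ρ0) :=
  map_mem_closure (continuous_avg i j) hρ fun _ h => avg_mem_attainable h hij he

theorem sum_eq_of_mem_closure_attainable {ρ : Fin n → ℝ}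
    (hρ : ρ ∈ closure (attainable n E ρ0)) : ∑ k, ρ k = ∑ k, ρ0 k := by
  have hclosed : IsClosed {σ : Fin n → ℝ | ∑ k, σ k = ∑ k, ρ0 k} :=
    isClosed_eq (continuous_finsetSum _ fun k _ => continuous_apply k) continuous_const
  exact closure_minimal (attainable_induction (P := fun σ => ∑ k, σ k = ∑ k, ρ0 k) rfl
    fun σ i j _ _ h => (sum_avg i j σ).trans h) hclosed hρ

theorem eq_of_adj_of_isMinOn_sum_sq {G : SimpleGraph (Fin n)} {ρ : Fin n → ℝ}
    (hmin : IsMinOn (fun σ : Fin n → ℝ => ∑ k, σ k ^ 2)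
      (closure (attainable n G.edgeSet ρ0)) ρ)
    (hρ : ρ ∈ closure (attainable n G.edgeSet ρ0)) {a b : Fin n} (hab : G.Adj a b) :
    ρ a = ρ b := by
  have hle : ∑ k, ρ k ^ 2 ≤ ∑ k, avg a b ρ k ^ 2 :=
    hmin (avg_mem_closure_attainable hρ hab.ne hab)
  rw [sum_sq_avg] at hle
  nlinarith [sq_nonneg (ρ a - ρ b)]

end Attainable

theorem SimpleGraph.Preconnected.eq_of_forall_adj {V α : Type*} {G : SimpleGraph V}
    (hG : G.Preconnected) {f : V → α} (hf : ∀ a b, G.Adj a b → f a = f b) (a b : V) :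
    f a = f b := by
  obtain ⟨w⟩ := hG a b
  induction w with
  | nil => rfl
  | cons h _ ih => exact (hf _ _ h).trans ih

theorem eq_const_sum_div_card {ι : Type*} [Fintype ι] [Nonempty ι] {ρ : ι → ℝ}
    (hρ : ∀ a b, ρ a = ρ b) : ρ = fun _ => (∑ k, ρ k) / Fintype.card ι := by
  funext a
  simp [hρ _ a]

theorem const_avg_mem_closure_attainable_general (n : ℕ)
    (G : SimpleGraph (Fin n)) (hG : G.Connected) (ρ0 : Fin n → ℝ) :
    (fun _ : Fin n => (∑ i, ρ0 i) / (n : ℝ)) ∈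
      closure (attainable n G.edgeSet ρ0) := by
  have := hG.nonempty
  obtain ⟨ρ, hρ, hmin⟩ := isCompact_closure_attainable.exists_isMinOn
    ⟨ρ0, subset_closure self_mem_attainable⟩
    (continuous_finsetSum _ fun k _ => (continuous_apply k).pow 2).continuousOn
  have hconst : ∀ a b, ρ a = ρ b :=
    hG.preconnected.eq_of_forall_adj fun _ _ hab => eq_of_adj_of_isMinOn_sum_sq hmin hρ hab
  have hρ_eq := eq_const_sum_div_card hconst
  rw [Fintype.card_fin] at hρ_eq
  rwa [← sum_eq_of_mem_closure_attainable hρ, ← hρ_eq]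

/-- For a connected simple graph `G` on `{1, …, n}`, the uniform vector, all of whose
components equal the average of the components of `ρ0`, lies in the closure of the
attainable set `A(ρ0, E(G))`. -/
theorem const_avg_mem_closure_attainable (n : ℕ) (hn : 0 < n)
    (G : SimpleGraph (Fin n)) (hG : G.Connected) (ρ0 : Fin n → ℝ) :
    (fun _ : Fin n => (∑ i, ρ0 i) / (n : ℝ)) ∈
      closure (attainable n G.edgeSet ρ0) :=
  const_avg_mem_closure_attainable_general n G hG ρ0
end

section
/- Let n ≥ 1, let ρ0 ∈ ℝ^n be strictly increasing (ρ0_1 < ρ0_2 < ⋯ < ρ0_n), and let A ⊆ {1,…,n−1} contain two consecutive integers i and i+1. Then S_A is not attainable in finitely many steps: S_A does not belong to the attainable set A(ρ0, E_P) of the path graph P_n (it is only an asymptotic, limit point of that set). -/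
/-!
Averaging two neighbours of a monotone vector keeps it monotone, and it cannot create three
consecutive equal entries: if `ρ_k < ρ_l` whenever `l ≥ k + 2`, the same holds after the step.
A strictly increasing `ρ0` has this property, hence so does every attainable vector. But when
`i, i + 1 ∈ A`, the indices `i, i + 1, i + 2` lie in one block, so `S_A` has three equal
consecutive entries.
-/

section

variable {n : ℕ}

def MonotoneNoTriplePlateau (ρ : Fin n → ℝ) : Prop :=
  Monotone ρ ∧ ∀ k l : Fin n, (k : ℕ) + 2 ≤ l → ρ k < ρ l

theorem StrictMono.monotoneNoTriplePlateau {ρ : Fin n → ℝ} (hρ : StrictMono ρ) :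
    MonotoneNoTriplePlateau ρ :=
  ⟨hρ.monotone, fun _ _ hkl => hρ (Fin.lt_def.mpr (by omega))⟩

theorem MonotoneNoTriplePlateau.of_eq_half_add {ρ σ : Fin n → ℝ}
    (hρ : MonotoneNoTriplePlateau ρ) (lo hi : Fin n → Fin n) (hlo : Monotone lo)
    (hhi : Monotone hi) (lo_le : ∀ k, lo k ≤ k) (le_hi : ∀ k, k ≤ hi k)
    (hi_le : ∀ k : Fin n, (hi k : ℕ) ≤ k + 1) (le_lo : ∀ k : Fin n, (k : ℕ) ≤ lo k + 1)
    (hσ : ∀ k, σ k = (ρ (lo k) + ρ (hi k)) / 2) :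
    MonotoneNoTriplePlateau σ := by
  refine ⟨fun k l hkl => ?_, fun k l hkl => ?_⟩
  · rw [hσ, hσ]
    linarith [hρ.1 (hlo hkl), hρ.1 (hhi hkl)]
  · have h_outer : ρ (lo k) < ρ (hi l) :=
      hρ.2 _ _ (by linarith [Fin.le_def.mp (lo_le k), Fin.le_def.mp (le_hi l)])
    have h_inner : ρ (hi k) ≤ ρ (lo l) :=
      hρ.1 (Fin.le_def.mpr (by linarith [hi_le k, le_lo l]))
    rw [hσ, hσ]
    linarith

theorem avg_comm (i j : Fin n) (ρ : Fin n → ℝ) : avg i j ρ = avg j i ρ := by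
  funext k
  simp only [avg, or_comm, add_comm]

theorem MonotoneNoTriplePlateau.avg_succ {ρ : Fin n → ℝ} (hρ : MonotoneNoTriplePlateau ρ)
    (p : ℕ) (hp : p + 1 < n) :
    MonotoneNoTriplePlateau (avg ⟨p, by omega⟩ ⟨p + 1, hp⟩ ρ) := by
  -- Off the edge, an entry is the mean `(ρ k + ρ k) / 2` of itself with itself.
  refine hρ.of_eq_half_add
    (fun k => if (k : ℕ) = p + 1 then ⟨p, by omega⟩ else k)
    (fun k => if (k : ℕ) = p then ⟨p + 1, hp⟩ else k) ?_ ?_ ?_ ?_ ?_ ?_ ?mean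
  case mean =>
    rintro ⟨k, hk⟩
    simp only [avg, Fin.ext_iff]
    split_ifs <;> subst_vars <;> first | omega | ring
  all_goals
    intro k
    try intro l hkl
    simp only [Fin.le_def, apply_ite Fin.val] at *
    split_ifs <;> omega

theorem MonotoneNoTriplePlateau.avg_of_mem_pathEdges {ρ : Fin n → ℝ}
    (hρ : MonotoneNoTriplePlateau ρ) {a b : Fin n} (hab : s(a, b) ∈ pathEdges n) :
    MonotoneNoTriplePlateau (avg a b ρ) := by
  obtain ⟨p, hp, hedge⟩ := hab
  rcases Sym2.eq_iff.mp hedge with ⟨rfl, rfl⟩ | ⟨rfl, rfl⟩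
  · exact hρ.avg_succ p hp
  · rw [avg_comm]
    exact hρ.avg_succ p hp

theorem MonotoneNoTriplePlateau.of_mem_attainable_pathEdges {ρ0 ρ : Fin n → ℝ}
    (h0 : MonotoneNoTriplePlateau ρ0) (hρ : ρ ∈ attainable n (pathEdges n) ρ0) :
    MonotoneNoTriplePlateau ρ := by
  obtain ⟨L, hL, rfl⟩ := hρ
  induction L generalizing ρ0 with
  | nil => exact h0
  | cons e L ih =>
    exact ih (h0.avg_of_mem_pathEdges (hL e List.mem_cons_self).2)
      fun e' he' => hL e' (List.mem_cons_of_mem e he')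

theorem blockStart_succ_of_mem {A : Finset ℕ} {j : ℕ} (hj : j ∈ A) :
    blockStart A (j + 1) = blockStart A j := by
  rw [blockStart, Nat.findGreatest_succ, if_neg (by simp [hj]), blockStart]

theorem blockEnd_succ_of_mem {A : Finset ℕ} {j : ℕ} (hj : j ∈ A) :
    blockEnd n A (j + 1) = blockEnd n A j := by
  unfold blockEnd
  congr 1
  ext b
  constructor
  · intro hb m hm
    rcases (Finset.mem_Ico.mp hm).1.eq_or_lt with rfl | hjm
    · exact hj
    · exact hb m (Finset.mem_Ico.mpr ⟨hjm, (Finset.mem_Ico.mp hm).2⟩)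
  · intro hb m hm
    exact hb m (Finset.Ico_subset_Ico_left (Nat.le_succ j) hm)

theorem SA_apply_succ_of_mem (ρ0 : Fin n → ℝ) {A : Finset ℕ} {j : ℕ} (hj : j ∈ A)
    (h : j + 1 < n) : SA ρ0 A ⟨j + 1, h⟩ = SA ρ0 A ⟨j, by omega⟩ := by
  simp only [SA, blockStart_succ_of_mem hj, blockEnd_succ_of_mem hj]

theorem SA_not_attainable_of_consecutive_general (n : ℕ)
    (ρ0 : Fin n → ℝ) (hρ0 : StrictMono ρ0)
    (A : Finset ℕ) (hA : A ⊆ Finset.range (n - 1))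
    (i : ℕ) (hi : i ∈ A) (hi1 : i + 1 ∈ A) :
    SA ρ0 A ∉ attainable n (pathEdges n) ρ0 := by
  intro hSA
  have hi2 : i + 2 < n := by have := Finset.mem_range.mp (hA hi1); omega
  have h_plateau : SA ρ0 A ⟨i + 2, hi2⟩ = SA ρ0 A ⟨i, by omega⟩ := by
    rw [SA_apply_succ_of_mem ρ0 hi1 hi2, SA_apply_succ_of_mem ρ0 hi]
  have h_strict : SA ρ0 A ⟨i, by omega⟩ < SA ρ0 A ⟨i + 2, hi2⟩ :=
    (hρ0.monotoneNoTriplePlateau.of_mem_attainable_pathEdges hSA).2 _ _ le_rfl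
  exact h_strict.ne' h_plateau

/-- If `ρ0` is strictly increasing and `A ⊆ {1, …, n−1}` contains two consecutive
integers `i` and `i+1`, then `S_A` is not attainable in finitely many steps on the
path graph `P_n`. -/
theorem SA_not_attainable_of_consecutive (n : ℕ) (hn : 1 ≤ n)
    (ρ0 : Fin n → ℝ) (hρ0 : StrictMono ρ0)
    (A : Finset ℕ) (hA : A ⊆ Finset.range (n - 1))
    (i : ℕ) (hi : i ∈ A) (hi1 : i + 1 ∈ A) :
    SA ρ0 A ∉ attainable n (pathEdges n) ρ0 :=
  SA_not_attainable_of_consecutive_general n ρ0 hρ0 A hA i hi hi1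
end
end

section
/- Let ρ ∈ ℝ^n be nondecreasing and let i, k be indices with 1 ≤ i, k ≥ 1, i + k ≤ n, and ρ_i < ρ_{i+k}. Let T = B_{i+k−1,i+k} ∘ ⋯ ∘ B_{i+1,i+2} ∘ B_{i,i+1} be the composition of the adjacent averaging operators along the block from i to i+k, applied left to right starting with B_{i,i+1}. Then 0 ≤ (Tρ)_{i+k} − (Tρ)_i < ρ_{i+k} − ρ_i, and (Tρ)_m = ρ_m for every index m with m < i or m > i+k. -/
section Avg

variable {n : ℕ} {i j k : Fin n} {ρ : Fin n → ℝ}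

theorem avg_apply_of_ne (hi : k ≠ i) (hj : k ≠ j) : avg i j ρ k = ρ k := by
  simp [avg, hi, hj]

theorem avg_apply_left : avg i j ρ i = (ρ i + ρ j) / 2 := by
  simp [avg]

theorem avg_apply_right : avg i j ρ j = (ρ i + ρ j) / 2 := by
  simp [avg]

theorem Monotone.avg_of_covBy (hρ : Monotone ρ) (hij : i ⋖ j) : Monotone (avg i j ρ) := by
  intro a b hab
  have hρij : ρ i ≤ ρ j := hρ hij.le
  dsimp only [avg]
  by_cases ha : a = i ∨ a = j <;> by_cases hb : b = i ∨ b = j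
  · rw [if_pos ha, if_pos hb]
  · have hib : i < b := lt_of_le_of_ne (by rcases ha with rfl | rfl; exacts [hab, hij.le.trans hab])
      (Ne.symm (not_or.1 hb).1)
    rw [if_pos ha, if_neg hb]
    linarith [hρ (hij.ge_of_gt hib)]
  · have haj : a < j := lt_of_le_of_ne (by rcases hb with rfl | rfl; exacts [hab.trans hij.le, hab])
      (not_or.1 ha).2
    rw [if_neg ha, if_pos hb]
    linarith [hρ (hij.le_of_lt haj)]
  · rw [if_neg ha, if_neg hb]
    exact hρ hab

end Avg

section Sweep

variable {n : ℕ} {ρ : Fin n → ℝ}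

theorem stepAt_apply_of_ne {p : ℕ} {j : Fin n} (hp : (j : ℕ) ≠ p) (hp' : (j : ℕ) ≠ p + 1) :
    stepAt n p ρ j = ρ j := by
  unfold stepAt
  split_ifs
  · exact avg_apply_of_ne (Fin.ne_of_val_ne hp) (Fin.ne_of_val_ne hp')
  · rfl

theorem Monotone.stepAt (hρ : Monotone ρ) (p : ℕ) : Monotone (_root_.stepAt n p ρ) := by
  unfold _root_.stepAt
  split_ifs
  · exact hρ.avg_of_covBy (Fin.covBy_iff.2 (Nat.covBy_iff_add_one_eq.2 rfl))
  · exact hρ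

/-- The paper's `T = B_{i+m-1,i+m} ∘ ⋯ ∘ B_{i,i+1}`, with 0-based indices. -/
noncomputable def sweep (n i m : ℕ) (ρ : Fin n → ℝ) : Fin n → ℝ :=
  (List.range m).foldl (fun τ p => stepAt n (i + p) τ) ρ

variable {i : ℕ}

theorem sweep_succ (m : ℕ) : sweep n i (m + 1) ρ = stepAt n (i + m) (sweep n i m ρ) := by
  rw [sweep, List.range_succ, List.foldl_append, List.foldl_cons, List.foldl_nil, sweep]

theorem Monotone.sweep (hρ : Monotone ρ) (m : ℕ) : Monotone (_root_.sweep n i m ρ) := by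
  induction m with
  | zero => exact hρ
  | succ m ih => rw [sweep_succ]; exact ih.stepAt _

theorem sweep_apply_of_lt_or_lt {m : ℕ} {j : Fin n} (hj : (j : ℕ) < i ∨ i + m < j) :
    sweep n i m ρ j = ρ j := by
  induction m with
  | zero => rfl
  | succ m ih => rw [sweep_succ, stepAt_apply_of_ne (by omega) (by omega), ih (by omega)]

theorem sweep_apply_start {m : ℕ} (hm : 1 ≤ m) (h : i + 1 < n) :
    sweep n i m ρ ⟨i, by omega⟩ = (ρ ⟨i, by omega⟩ + ρ ⟨i + 1, h⟩) / 2 := by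
  induction m, hm using Nat.le_induction with
  | base => rw [sweep_succ, stepAt, dif_pos h]; exact avg_apply_left
  | succ m hm ih =>
    rw [sweep_succ, stepAt_apply_of_ne (by dsimp only; omega) (by dsimp only; omega), ih]

theorem sweep_apply_succ_last {m : ℕ} (h : i + m + 1 < n) :
    sweep n i (m + 1) ρ ⟨i + m + 1, h⟩ =
      (sweep n i m ρ ⟨i + m, by omega⟩ + ρ ⟨i + m + 1, h⟩) / 2 := by
  rw [sweep_succ, stepAt, dif_pos h, avg_apply_right,
    sweep_apply_of_lt_or_lt (j := ⟨i + m + 1, h⟩) (by simp)]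

theorem sweep_last_gap (hρ : Monotone ρ) {m : ℕ} (h : i + m < n) :
    (ρ ⟨i + m, h⟩ - ρ ⟨i, by omega⟩) / 2 ^ m ≤ ρ ⟨i + m, h⟩ - sweep n i m ρ ⟨i + m, h⟩ := by
  induction m with
  | zero => simp [sweep]
  | succ m ih =>
    have h' : i + m + 1 < n := h
    have hmono : ρ ⟨i + m, by omega⟩ ≤ ρ ⟨i + m + 1, h'⟩ := hρ (Fin.mk_le_mk.2 (by omega))
    have hdiv : (ρ ⟨i + m + 1, h'⟩ - ρ ⟨i + m, by omega⟩) / 2 ^ m ≤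
        ρ ⟨i + m + 1, h'⟩ - ρ ⟨i + m, by omega⟩ :=
      div_le_self (sub_nonneg.2 hmono) (one_le_pow₀ one_le_two)
    have hsplit : (ρ ⟨i + m + 1, h'⟩ - ρ ⟨i, by omega⟩) / 2 ^ m =
        (ρ ⟨i + m + 1, h'⟩ - ρ ⟨i + m, by omega⟩) / 2 ^ m +
          (ρ ⟨i + m, by omega⟩ - ρ ⟨i, by omega⟩) / 2 ^ m := by ring
    change (ρ ⟨i + m + 1, h'⟩ - ρ ⟨i, by omega⟩) / 2 ^ (m + 1) ≤
      ρ ⟨i + m + 1, h'⟩ - sweep n i (m + 1) ρ ⟨i + m + 1, h'⟩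
    rw [sweep_apply_succ_last h', pow_succ, ← div_div, hsplit]
    linarith [ih (by omega)]

end Sweep

/-- Sweeping a block strictly decreases its spread: if `ρ` is nondecreasing and
`ρ_i < ρ_{i+k}`, then for `T = B_{i+k−1,i+k} ∘ ⋯ ∘ B_{i,i+1}` (applied starting with
`B_{i,i+1}`) one has `0 ≤ (Tρ)_{i+k} − (Tρ)_i < ρ_{i+k} − ρ_i`, and `Tρ` agrees with
`ρ` outside the block `[i, i+k]`. -/
theorem block_sweep_decreases_spread (n : ℕ) (ρ : Fin n → ℝ) (hρ : Monotone ρ)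
    (i k : ℕ) (hk : 1 ≤ k) (h : i + k < n)
    (hlt : ρ ⟨i, by omega⟩ < ρ ⟨i + k, h⟩) :
    0 ≤ ((List.range k).foldl (fun τ m => stepAt n (i + m) τ) ρ) ⟨i + k, h⟩ -
        ((List.range k).foldl (fun τ m => stepAt n (i + m) τ) ρ) ⟨i, by omega⟩ ∧
    ((List.range k).foldl (fun τ m => stepAt n (i + m) τ) ρ) ⟨i + k, h⟩ -
        ((List.range k).foldl (fun τ m => stepAt n (i + m) τ) ρ) ⟨i, by omega⟩ <
      ρ ⟨i + k, h⟩ - ρ ⟨i, by omega⟩ ∧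
    ∀ (m : ℕ) (hm : m < n), m < i ∨ i + k < m →
      ((List.range k).foldl (fun τ m' => stepAt n (i + m') τ) ρ) ⟨m, hm⟩ = ρ ⟨m, hm⟩ := by
  have hstart := sweep_apply_start (ρ := ρ) hk (by omega : i + 1 < n)
  have hgap := sweep_last_gap hρ h
  have hgap_pos : 0 < (ρ ⟨i + k, h⟩ - ρ ⟨i, by omega⟩) / 2 ^ k := by
    have := sub_pos.2 hlt
    positivity
  have hρ_start : ρ ⟨i, by omega⟩ ≤ ρ ⟨i + 1, by omega⟩ := hρ (Fin.mk_le_mk.2 (by omega))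
  rw [sweep] at hstart hgap
  exact ⟨sub_nonneg.2 (hρ.sweep k (Fin.mk_le_mk.2 (by omega))), by linarith,
    fun m hm hout => sweep_apply_of_lt_or_lt hout⟩
end
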